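/- arXiv:2304.07347 — 3 statements merged into one kernel-verified Lean document; each statement's English description precedes it below -/
import Mathlib

section
/- Let A be an invertible n×n real matrix and let X and Y be n×n real symmetric positive definite matrices. Then for every t ∈ [0,1], (A X Aᵀ) *_t (A Y Aᵀ) = A (X *_t Y) Aᵀ. -/
open Matrix Filter Topology
open scoped Classical

noncomputable section

/-- Square real matrices. -/
abbrev Mat (n : ℕ) := Matrix (Fin n) (Fin n) ℝ

/-- The largest element of the real spectrum of a matrix. -/
noncomputable def lamMax {n : ℕ} (A : Mat n) : ℝ := sSup (spectrum ℝ A)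

/-- The smallest element of the real spectrum of a matrix. -/
noncomputable def lamMin {n : ℕ} (A : Mat n) : ℝ := sInf (spectrum ℝ A)

/-- The positive semidefinite square root (junk value `0` if not PSD). -/
noncomputable def sqrtM {n : ℕ} (X : Mat n) : Mat n :=
  if h : X.PosSemidef then
    (h.1.eigenvectorUnitary : Mat n) * Matrix.diagonal (fun i => Real.sqrt (h.1.eigenvalues i)) *
      (star (h.1.eigenvectorUnitary : Mat n))
  else 0

/-- `X^{-1/2}` for a positive definite matrix. -/
noncomputable def invSqrt {n : ℕ} (X : Mat n) : Mat n := (sqrtM X)⁻¹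

/-- `λ_max(X^{-1/2} Y X^{-1/2})`, the largest generalized eigenvalue of the pair `(Y, X)`. -/
noncomputable def gmax {n : ℕ} (X Y : Mat n) : ℝ := lamMax (invSqrt X * Y * invSqrt X)

/-- `λ_min(X^{-1/2} Y X^{-1/2})`, the smallest generalized eigenvalue of the pair `(Y, X)`. -/
noncomputable def gmin {n : ℕ} (X Y : Mat n) : ℝ := lamMin (invSqrt X * Y * invSqrt X)

/-- The Thompson geodesic `X *_t Y`. -/
noncomputable def thompson {n : ℕ} (X Y : Mat n) (t : ℝ) : Mat n :=
  if gmin X Y = gmax X Y then (gmin X Y) ^ t • X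
  else ((gmax X Y ^ t - gmin X Y ^ t) / (gmax X Y - gmin X Y)) • Y +
    ((gmax X Y * gmin X Y ^ t - gmin X Y * gmax X Y ^ t) / (gmax X Y - gmin X Y)) • X

/-- The Thompson part metric on positive definite matrices. -/
noncomputable def dT {n : ℕ} (X Y : Mat n) : ℝ :=
  max (Real.log (gmax X Y)) (Real.log (gmax Y X))

/-- Hilbert's projective metric on positive definite matrices. -/
noncomputable def dH {n : ℕ} (X Y : Mat n) : ℝ :=
  Real.log (gmax X Y / gmin X Y)

/-- The coefficient `m(X,Y) = dφ/dt(0)` of the Thompson geodesic. -/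
noncomputable def mCoef {n : ℕ} (X Y : Mat n) : ℝ :=
  if gmax X Y = gmin X Y then 1 / gmin X Y
  else (Real.log (gmax X Y) - Real.log (gmin X Y)) / (gmax X Y - gmin X Y)

/-- The coefficient `o(X,Y) = dψ/dt(0)` of the Thompson geodesic. -/
noncomputable def oCoef {n : ℕ} (X Y : Mat n) : ℝ :=
  if gmax X Y = gmin X Y then Real.log (gmin X Y) - 1
  else (gmax X Y * Real.log (gmin X Y) - gmin X Y * Real.log (gmax X Y)) /
    (gmax X Y - gmin X Y)

/-- The mean equation `∑ⱼ m(X*,Yⱼ)·Yⱼ + (∑ⱼ o(X*,Yⱼ))·X* = 0`. -/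
def MeanEq {n k : ℕ} (Y : Fin k → Mat n) (Xs : Mat n) : Prop :=
  ∑ j, mCoef Xs (Y j) • Y j + (∑ j, oCoef Xs (Y j)) • Xs = 0

/-- The Frobenius norm of a matrix. -/
noncomputable def frob {n : ℕ} (A : Mat n) : ℝ :=
  Real.sqrt (∑ i, ∑ j, (A i j) ^ 2)

/-- The inductive sequence of Algorithm 4.1: `indSeq hk Y X₁ i = X_{i+1}`, so that
`indSeq hk Y X₁ 0 = X₁` and `X_{i+1} = X_i *_{1/(i+1)} Y_j` with `j ≡ i (mod k)`,
`1 ≤ j ≤ k`. -/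
noncomputable def indSeq {n k : ℕ} (hk : 0 < k) (Y : Fin k → Mat n) (X₁ : Mat n) :
    ℕ → Mat n
  | 0 => X₁
  | (i + 1) => thompson (indSeq hk Y X₁ i) (Y ⟨i % k, Nat.mod_lt i hk⟩)
      (1 / ((i : ℝ) + 2))

/-- The map `T_p(X) = (⋯((X *_{1/(pk+2)} Y₁) *_{1/(pk+3)} Y₂)⋯) *_{1/((p+1)k+1)} Y_k`. -/
noncomputable def Tmap {n k : ℕ} (Y : Fin k → Mat n) (p : ℕ) (X : Mat n) : Mat n :=
  (List.finRange k).foldl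
    (fun Z j => thompson Z (Y j) (1 / ((p : ℝ) * (k : ℝ) + ((j : ℕ) : ℝ) + 2))) X

/-- The spectral `t`-th power of a symmetric matrix (junk value `0` otherwise). -/
noncomputable def spdPow {n : ℕ} (A : Mat n) (t : ℝ) : Mat n :=
  if h : A.IsHermitian then
    (h.eigenvectorUnitary : Mat n) * Matrix.diagonal (fun i => h.eigenvalues i ^ t) *
      (star (h.eigenvectorUnitary : Mat n))
  else 0

/-- The affine-invariant Riemannian geodesic `X #_t Y = X^{1/2} (X^{-1/2} Y X^{-1/2})^t X^{1/2}`. -/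
noncomputable def riemann {n : ℕ} (X Y : Mat n) (t : ℝ) : Mat n :=
  sqrtM X * spdPow (invSqrt X * Y * invSqrt X) t * sqrtM X

/-!
The extreme generalized eigenvalues of `(Y, X)` only depend on the spectrum of `Y X⁻¹`, because
`X^{-1/2} Y X^{-1/2}` and `Y X^{-1/2} X^{-1/2} = Y X⁻¹` have the same spectrum. A congruence
`X ↦ A X Aᵀ` turns `Y X⁻¹` into the similar matrix `A (Y X⁻¹) A⁻¹`, so `α` and `β` are unchanged, and
`X *_t Y` is a linear combination of `X` and `Y` whose coefficients depend only on `α`, `β` and `t`.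
-/

theorem spectrum_mul_comm_of_isUnit {R B : Type*} [CommSemiring R] [Ring B] [Algebra R B]
    {a : B} (ha : IsUnit a) (b : B) : spectrum R (a * b) = spectrum R (b * a) := by
  obtain ⟨u, rfl⟩ := ha
  simpa [mul_assoc] using spectrum.units_conjugate (R := R) (a := b * u) (u := u)

namespace Matrix

variable {m K : Type*} [Fintype m] [DecidableEq m] [CommRing K]

theorem spectrum_mul_mul_nonsing_inv {A : Matrix m m K} (hA : IsUnit A) (M : Matrix m m K) :
    spectrum K (A * M * A⁻¹) = spectrum K M := by
  lift A to (Matrix m m K)ˣ using hA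
  rw [← coe_units_inv, spectrum.units_conjugate]

theorem spectrum_mul_mul_transpose_mul_inv {A : Matrix m m K} (hA : IsUnit A)
    (X Y : Matrix m m K) :
    spectrum K (A * Y * Aᵀ * (A * X * Aᵀ)⁻¹) = spectrum K (Y * X⁻¹) := by
  have hAT : Aᵀ * Aᵀ⁻¹ = 1 :=
    mul_nonsing_inv _ ((isUnit_iff_isUnit_det _).1 ((isUnit_transpose A).2 hA))
  have hconj : A * Y * Aᵀ * (A * X * Aᵀ)⁻¹ = A * (Y * X⁻¹) * A⁻¹ := by
    simp only [mul_inv_rev, Matrix.mul_assoc]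
    rw [← Matrix.mul_assoc Aᵀ, hAT, Matrix.one_mul]
  rw [hconj, spectrum_mul_mul_nonsing_inv hA]

theorem PosDef.mul_mul_transpose_of_isUnit {X : Matrix m m ℝ} (hX : X.PosDef)
    {A : Matrix m m ℝ} (hA : IsUnit A) : (A * X * Aᵀ).PosDef := by
  simpa [conjTranspose_eq_transpose_of_trivial] using
    hX.mul_mul_conjTranspose_same (vecMul_injective_iff_isUnit.2 hA)

end Matrix

section SqrtM

variable {n : ℕ} {X : Mat n}

theorem sqrtM_mul_self (hX : X.PosSemidef) : sqrtM X * sqrtM X = X := by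
  rw [sqrtM, dif_pos hX]
  set U : Mat n := ↑hX.1.eigenvectorUnitary
  have hU : star U * U = 1 := Unitary.coe_star_mul_self _
  conv_rhs => rw [hX.1.spectral_theorem, Unitary.conjStarAlgAut_apply]
  simp only [Matrix.mul_assoc]
  rw [← Matrix.mul_assoc (star U), hU, Matrix.one_mul, ← Matrix.mul_assoc (Matrix.diagonal _),
    Matrix.diagonal_mul_diagonal]
  congr 3
  funext i
  simp [Real.mul_self_sqrt (hX.eigenvalues_nonneg i)]

theorem isUnit_sqrtM (hX : X.PosDef) : IsUnit (sqrtM X) := by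
  have hdet : (sqrtM X).det * (sqrtM X).det = X.det := by
    rw [← Matrix.det_mul, sqrtM_mul_self hX.posSemidef]
  rw [Matrix.isUnit_iff_isUnit_det, isUnit_iff_ne_zero]
  rintro h0
  rw [h0, mul_zero] at hdet
  exact hX.det_pos.ne hdet

theorem spectrum_invSqrt_mul_mul_invSqrt (hX : X.PosDef) (Y : Mat n) :
    spectrum ℝ (invSqrt X * Y * invSqrt X) = spectrum ℝ (Y * X⁻¹) := by
  have hinv : IsUnit (invSqrt X) := (Matrix.isUnit_nonsing_inv_iff).2 (isUnit_sqrtM hX)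
  rw [Matrix.mul_assoc, spectrum_mul_comm_of_isUnit hinv, Matrix.mul_assoc, invSqrt,
    ← Matrix.mul_inv_rev, sqrtM_mul_self hX.posSemidef]

end SqrtM

section Congruence

variable {n : ℕ} {A X : Mat n}

theorem spectrum_invSqrt_congr (hA : IsUnit A) (hX : X.PosDef) (Y : Mat n) :
    spectrum ℝ (invSqrt (A * X * Aᵀ) * (A * Y * Aᵀ) * invSqrt (A * X * Aᵀ))
      = spectrum ℝ (invSqrt X * Y * invSqrt X) := by
  rw [spectrum_invSqrt_mul_mul_invSqrt (hX.mul_mul_transpose_of_isUnit hA),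
    spectrum_invSqrt_mul_mul_invSqrt hX, Matrix.spectrum_mul_mul_transpose_mul_inv hA]

theorem gmax_congr (hA : IsUnit A) (hX : X.PosDef) (Y : Mat n) :
    gmax (A * X * Aᵀ) (A * Y * Aᵀ) = gmax X Y := by
  rw [gmax, lamMax, spectrum_invSqrt_congr hA hX, ← lamMax, ← gmax]

theorem gmin_congr (hA : IsUnit A) (hX : X.PosDef) (Y : Mat n) :
    gmin (A * X * Aᵀ) (A * Y * Aᵀ) = gmin X Y := by
  rw [gmin, lamMin, spectrum_invSqrt_congr hA hX, ← lamMin, ← gmin]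

end Congruence

theorem thompson_affine_invariant_general {n : ℕ} (A X Y : Mat n) (hA : IsUnit A)
    (hX : X.PosDef) (t : ℝ) :
    thompson (A * X * Aᵀ) (A * Y * Aᵀ) t = A * thompson X Y t * Aᵀ := by
  rw [thompson, thompson, gmax_congr hA hX, gmin_congr hA hX]
  split_ifs
  · simp
  · simp [Matrix.mul_add, Matrix.add_mul]

/-- affine invariance of the Thompson geodesic. -/
theorem thompson_affine_invariant {n : ℕ} (A X Y : Mat n) (hA : IsUnit A)
    (hX : X.PosDef) (hY : Y.PosDef) (t : ℝ) (ht : t ∈ Set.Icc (0 : ℝ) 1) :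
    thompson (A * X * Aᵀ) (A * Y * Aᵀ) t = A * thompson X Y t * Aᵀ :=
  thompson_affine_invariant_general A X Y hA hX t
end
end

section
/- Let X and Y be n×n real symmetric positive definite matrices. Then for every t ∈ [0,1], X *_t Y = Y *_{1−t} X. -/
open Matrix Filter Topology
open scoped Classical

noncomputable section

/-! With `S = X^{1/2}` and `T = Y^{1/2}`, the matrix `T⁻¹ X T⁻¹` is conjugate (by `T⁻¹ S`) to the
inverse of `S⁻¹ Y S⁻¹`, so the generalized eigenvalues of `(X, Y)` are the reciprocals of those of
`(Y, X)`: passing from `(X, Y, t)` to `(Y, X, 1 - t)` replaces `(α, β)` by `(1/β, 1/α)`, and a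
direct computation shows that this exchanges the two coefficients of the geodesic. When `α = β`, the
matrix `X^{-1/2} Y X^{-1/2}` has one-point spectrum, so `Y = α X`. -/

namespace Real

lemma sSup_inv_eq_inv_sInf {s : Set ℝ} (hs : s.Finite) (hpos : ∀ x ∈ s, 0 < x) :
    sSup s⁻¹ = (sInf s)⁻¹ := by
  rcases s.eq_empty_or_nonempty with rfl | hne
  · simp
  have hmin : sInf s ∈ s := hne.csInf_mem hs
  refine IsGreatest.csSup_eq ⟨by simpa using hmin, fun y hy => ?_⟩
  have hy_pos : 0 < y := inv_pos.mp (hpos _ hy)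
  exact (le_inv_comm₀ (hpos _ hmin) hy_pos).mp (csInf_le hs.bddBelow hy)

lemma sInf_inv_eq_inv_sSup {s : Set ℝ} (hs : s.Finite) (hpos : ∀ x ∈ s, 0 < x) :
    sInf s⁻¹ = (sSup s)⁻¹ := by
  have h := sSup_inv_eq_inv_sInf hs.inv fun x hx => inv_pos.mp (hpos _ hx)
  rw [inv_inv] at h
  rw [h, inv_inv]

end Real

lemma spectrum.units_conj_sq_swap {𝕜 A : Type*} [Field 𝕜] [Ring A] [Algebra 𝕜 A] (s t : Aˣ) :
    spectrum 𝕜 (↑(t⁻¹ * (s * s) * t⁻¹) : A) = (spectrum 𝕜 (↑(s⁻¹ * (t * t) * s⁻¹) : A))⁻¹ := by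
  have hconj : t⁻¹ * (s * s) * t⁻¹ = (t⁻¹ * s) * (s⁻¹ * (t * t) * s⁻¹)⁻¹ * (t⁻¹ * s)⁻¹ := by
    group
  rw [hconj, Units.val_mul, Units.val_mul, spectrum.units_conjugate, spectrum.map_inv]

namespace Matrix

variable {n : ℕ}

lemma posSemidef_sqrtM {X : Mat n} (hX : X.PosSemidef) : (sqrtM X).PosSemidef := by
  rw [sqrtM, dif_pos hX]
  exact (posSemidef_diagonal_iff.mpr fun i => Real.sqrt_nonneg _).mul_mul_conjTranspose_same _

lemma sqrtM_mul_self {X : Mat n} (hX : X.PosSemidef) : sqrtM X * sqrtM X = X := by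
  rw [sqrtM, dif_pos hX]
  set U : Mat n := (hX.1.eigenvectorUnitary : Mat n)
  have hU : star U * U = 1 := Unitary.star_mul_self_of_mem hX.1.eigenvectorUnitary.2
  have hsq : (diagonal fun i => √(hX.1.eigenvalues i)) * (diagonal fun i => √(hX.1.eigenvalues i))
      = diagonal (RCLike.ofReal ∘ hX.1.eigenvalues) := by
    rw [diagonal_mul_diagonal]
    exact congrArg diagonal (funext fun i => Real.mul_self_sqrt (hX.eigenvalues_nonneg i))
  conv_rhs => rw [hX.1.spectral_theorem, Unitary.conjStarAlgAut_apply, ← hsq]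
  simp only [Matrix.mul_assoc]
  rw [← Matrix.mul_assoc (star U) U, hU, Matrix.one_mul]

lemma posDef_sqrtM {X : Mat n} (hX : X.PosDef) : (sqrtM X).PosDef := by
  refine (posSemidef_sqrtM hX.posSemidef).posDef_iff_isUnit.mpr ?_
  have hdet : IsUnit (det (sqrtM X) * det (sqrtM X)) := by
    rw [← det_mul, sqrtM_mul_self hX.posSemidef]
    exact hX.det_pos.ne'.isUnit
  exact (isUnit_iff_isUnit_det _).mpr (IsUnit.mul_iff.mp hdet).1

def sqrtUnit {X : Mat n} (hX : X.PosDef) : (Mat n)ˣ := (posDef_sqrtM hX).isUnit.unit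

lemma val_sqrtUnit {X : Mat n} (hX : X.PosDef) : (sqrtUnit hX : Mat n) = sqrtM X :=
  IsUnit.unit_spec _

lemma val_inv_sqrtUnit {X : Mat n} (hX : X.PosDef) : (↑(sqrtUnit hX)⁻¹ : Mat n) = invSqrt X := by
  rw [coe_units_inv, val_sqrtUnit, invSqrt]

lemma invSqrt_conj_eq {X Y : Mat n} (hX : X.PosDef) (hY : Y.PosDef) :
    invSqrt X * Y * invSqrt X =
      ↑((sqrtUnit hX)⁻¹ * (sqrtUnit hY * sqrtUnit hY) * (sqrtUnit hX)⁻¹) := by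
  rw [Units.val_mul, Units.val_mul, Units.val_mul, val_inv_sqrtUnit, val_sqrtUnit,
    sqrtM_mul_self hY.posSemidef]

lemma sqrtM_mul_invSqrt_conj {X : Mat n} (hX : X.PosDef) (Y : Mat n) :
    sqrtM X * (invSqrt X * Y * invSqrt X) * sqrtM X = Y := by
  rw [← val_sqrtUnit hX, ← val_inv_sqrtUnit hX]
  simp only [Matrix.mul_assoc, Units.inv_mul, Matrix.mul_one, Units.mul_inv_cancel_left]

lemma posDef_invSqrt_conj {X Y : Mat n} (hX : X.PosDef) (hY : Y.PosDef) :
    (invSqrt X * Y * invSqrt X).PosDef := by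
  have hC : (invSqrt X).PosDef := (posDef_sqrtM hX).inv
  have h := hY.posSemidef.mul_mul_conjTranspose_same (invSqrt X)
  rw [hC.isHermitian.eq] at h
  exact h.posDef_iff_isUnit.mpr ((hC.isUnit.mul hY.isUnit).mul hC.isUnit)

lemma spectrum_invSqrt_conj_swap {X Y : Mat n} (hX : X.PosDef) (hY : Y.PosDef) :
    spectrum ℝ (invSqrt Y * X * invSqrt Y) = (spectrum ℝ (invSqrt X * Y * invSqrt X))⁻¹ := by
  rw [invSqrt_conj_eq hX hY, invSqrt_conj_eq hY hX, spectrum.units_conj_sq_swap]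

lemma PosDef.pos_of_mem_spectrum {A : Mat n} (hA : A.PosDef) {x : ℝ} (hx : x ∈ spectrum ℝ A) :
    0 < x := by
  obtain ⟨i, rfl⟩ := hA.isHermitian.spectrum_real_eq_range_eigenvalues ▸ hx
  exact hA.eigenvalues_pos i

lemma gmax_swap {X Y : Mat n} (hX : X.PosDef) (hY : Y.PosDef) : gmax Y X = (gmin X Y)⁻¹ := by
  rw [gmax, gmin, lamMax, lamMin, spectrum_invSqrt_conj_swap hX hY,
    Real.sSup_inv_eq_inv_sInf finite_real_spectrum
      fun _ => (posDef_invSqrt_conj hX hY).pos_of_mem_spectrum]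

lemma gmin_swap {X Y : Mat n} (hX : X.PosDef) (hY : Y.PosDef) : gmin Y X = (gmax X Y)⁻¹ := by
  rw [gmin, gmax, lamMin, lamMax, spectrum_invSqrt_conj_swap hX hY,
    Real.sInf_inv_eq_inv_sSup finite_real_spectrum
      fun _ => (posDef_invSqrt_conj hX hY).pos_of_mem_spectrum]

lemma IsHermitian.spectrum_real_nonempty [Nonempty (Fin n)] {A : Mat n} (hA : A.IsHermitian) :
    (spectrum ℝ A).Nonempty :=
  hA.spectrum_real_eq_range_eigenvalues ▸ Set.range_nonempty _

lemma IsHermitian.lamMin_mem_spectrum [Nonempty (Fin n)] {A : Mat n} (hA : A.IsHermitian) :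
    lamMin A ∈ spectrum ℝ A :=
  hA.spectrum_real_nonempty.csInf_mem finite_real_spectrum

lemma IsHermitian.lamMax_mem_spectrum [Nonempty (Fin n)] {A : Mat n} (hA : A.IsHermitian) :
    lamMax A ∈ spectrum ℝ A :=
  hA.spectrum_real_nonempty.csSup_mem finite_real_spectrum

lemma eq_gmin_smul_of_gmin_eq_gmax {X Y : Mat n} (hX : X.PosDef) (hY : Y.PosDef)
    (h : gmin X Y = gmax X Y) : Y = gmin X Y • X := by
  have hA := posDef_invSqrt_conj hX hY
  have hspec : spectrum ℝ (invSqrt X * Y * invSqrt X) ⊆ {gmin X Y} := fun x hx =>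
    le_antisymm (h ▸ le_csSup finite_real_spectrum.bddAbove hx)
      (csInf_le finite_real_spectrum.bddBelow hx)
  have hscalar : invSqrt X * Y * invSqrt X = gmin X Y • (1 : Mat n) := by
    rw [← Algebra.algebraMap_eq_smul_one]
    exact CFC.eq_algebraMap_of_spectrum_subset_singleton _ _ hspec hA.isHermitian
  conv_lhs => rw [← sqrtM_mul_invSqrt_conj hX Y]
  rw [hscalar, Matrix.mul_smul, Matrix.mul_one, Matrix.smul_mul,
    sqrtM_mul_self hX.posSemidef]

end Matrix

namespace Real

lemma inv_rpow_one_sub {a : ℝ} (ha : 0 < a) (t : ℝ) : a⁻¹ ^ (1 - t) = a ^ t / a := by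
  rw [Real.inv_rpow ha.le, Real.rpow_sub ha, Real.rpow_one, inv_div]

lemma inv_rpow_one_sub_sub_div_inv_sub_inv {a b : ℝ} (ha : 0 < a) (hb : 0 < b) (hab : a ≠ b)
    (t : ℝ) :
    (a⁻¹ ^ (1 - t) - b⁻¹ ^ (1 - t)) / (a⁻¹ - b⁻¹) = (b * a ^ t - a * b ^ t) / (b - a) := by
  have hba : b - a ≠ 0 := sub_ne_zero.mpr hab.symm
  have hinv : a⁻¹ - b⁻¹ ≠ 0 := sub_ne_zero.mpr (inv_injective.ne hab)
  rw [inv_rpow_one_sub ha, inv_rpow_one_sub hb]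
  field_simp

lemma inv_mul_inv_rpow_one_sub_sub_div_inv_sub_inv {a b : ℝ} (ha : 0 < a) (hb : 0 < b)
    (hab : a ≠ b) (t : ℝ) :
    (a⁻¹ * b⁻¹ ^ (1 - t) - b⁻¹ * a⁻¹ ^ (1 - t)) / (a⁻¹ - b⁻¹) = (b ^ t - a ^ t) / (b - a) := by
  have hba : b - a ≠ 0 := sub_ne_zero.mpr hab.symm
  have hinv : a⁻¹ - b⁻¹ ≠ 0 := sub_ne_zero.mpr (inv_injective.ne hab)
  rw [inv_rpow_one_sub ha, inv_rpow_one_sub hb]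
  field_simp

end Real

theorem thompson_symm_general {n : ℕ} (X Y : Mat n) (hX : X.PosDef) (hY : Y.PosDef)
    (t : ℝ) :
    thompson X Y t = thompson Y X (1 - t) := by
  rcases isEmpty_or_nonempty (Fin n) with hn | hn
  · exact Subsingleton.elim _ _
  have hA := posDef_invSqrt_conj hX hY
  have hα : 0 < gmin X Y := hA.pos_of_mem_spectrum hA.isHermitian.lamMin_mem_spectrum
  have hβ : 0 < gmax X Y := hA.pos_of_mem_spectrum hA.isHermitian.lamMax_mem_spectrum
  rw [thompson, thompson, gmin_swap hX hY, gmax_swap hX hY]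
  by_cases h : gmin X Y = gmax X Y
  · rw [if_pos h, if_pos (by rw [h])]
    calc gmin X Y ^ t • X = ((gmin X Y)⁻¹ ^ (1 - t) * gmin X Y) • X := by
          rw [Real.inv_rpow_one_sub hα, div_mul_cancel₀ _ hα.ne']
      _ = (gmax X Y)⁻¹ ^ (1 - t) • Y := by
          rw [mul_smul, ← eq_gmin_smul_of_gmin_eq_gmax hX hY h, h]
  · rw [if_neg h, if_neg (by rwa [_root_.inv_inj, eq_comm]),
      Real.inv_rpow_one_sub_sub_div_inv_sub_inv hα hβ h,
      Real.inv_mul_inv_rpow_one_sub_sub_div_inv_sub_inv hα hβ h, add_comm]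

/-- symmetry of the Thompson geodesic. -/
theorem thompson_symm {n : ℕ} (X Y : Mat n) (hX : X.PosDef) (hY : Y.PosDef)
    (t : ℝ) (ht : t ∈ Set.Icc (0 : ℝ) 1) :
    thompson X Y t = thompson Y X (1 - t) :=
  thompson_symm_general X Y hX hY t
end
end

section
/- Let Y₁, …, Y_k be n×n real symmetric positive definite matrices, let X* be a symmetric positive definite matrix satisfying the mean equation m(X*,Y₁)·Y₁ + … + m(X*,Y_k)·Y_k + (o(X*,Y₁) + … + o(X*,Y_k))·X* = 0, and let c₁, …, c_k > 0 be real scalars. Then (c₁⋯c_k)^{1/k}·X* satisfies the mean equation for the data (c₁Y₁, …, c_kY_k); that is, the inductive Thompson mean is jointly homogeneous: M(c₁Y₁, …, c_kY_k) = (c₁⋯c_k)^{1/k}·M(Y₁,…,Y_k). -/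
open Matrix Filter Topology
open scoped Classical

noncomputable section

/-!
Scaling `X` by `γ` and `Yⱼ` by `cⱼ` multiplies the generalized eigenvalues of `(Yⱼ, X)` by
`rⱼ = cⱼ / γ`. Since `m` is homogeneous of degree `-1` in the eigenvalues and `o` is shifted by
`log rⱼ`, each term `m · Yⱼ` gets multiplied by `γ`, while `∑ⱼ o` changes by `∑ⱼ log rⱼ`, which
vanishes because `γ` is the geometric mean of the `cⱼ`. So the whole left side of the mean
equation gets multiplied by `γ`.
-/

open Real

def invLogMean (a b : ℝ) : ℝ :=
  if b = a then 1 / a else (log b - log a) / (b - a)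

def thompsonOffset (a b : ℝ) : ℝ :=
  if b = a then log a - 1 else (b * log a - a * log b) / (b - a)

section LogMean

variable {a b r : ℝ}

theorem invLogMean_mul_mul (ha : a ≠ 0) (hb : b ≠ 0) (hr : r ≠ 0) :
    invLogMean (r * a) (r * b) = invLogMean a b / r := by
  unfold invLogMean
  rcases eq_or_ne b a with rfl | hba
  · simp only [if_true]
    field_simp
  · rw [if_neg ((mul_right_injective₀ hr).ne hba), if_neg hba, log_mul hr hb, log_mul hr ha]
    field_simp
    ring

theorem thompsonOffset_mul_mul (ha : a ≠ 0) (hb : b ≠ 0) (hr : r ≠ 0) :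
    thompsonOffset (r * a) (r * b) = thompsonOffset a b + log r := by
  unfold thompsonOffset
  rcases eq_or_ne b a with rfl | hba
  · simp only [if_true, log_mul hr ha]
    ring
  · have hba' : b - a ≠ 0 := sub_ne_zero.mpr hba
    rw [if_neg ((mul_right_injective₀ hr).ne hba), if_neg hba, log_mul hr hb, log_mul hr ha]
    field_simp
    ring

end LogMean

section Matrix

variable {n : ℕ}

theorem sqrtM_eq_cfc {X : Mat n} (hX : X.PosSemidef) : sqrtM X = cfc Real.sqrt X := by
  rw [sqrtM, dif_pos hX, hX.1.cfc_eq, IsHermitian.cfc, Unitary.conjStarAlgAut_apply]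
  simp [Function.comp_def]

theorem sqrtM_smul {c : ℝ} (hc : 0 ≤ c) {X : Mat n} (hX : X.PosSemidef) :
    sqrtM (c • X) = √c • sqrtM X := by
  rw [sqrtM_eq_cfc (hX.smul hc), sqrtM_eq_cfc hX]
  refine (cfc_comp_smul c Real.sqrt X (ha := hX.1)).symm.trans ?_
  refine Eq.trans ?_ (cfc_const_mul (√c) Real.sqrt X)
  congr 1
  funext x
  rw [smul_eq_mul, Real.sqrt_mul hc]

theorem isUnit_det_sqrtM {X : Mat n} (hX : X.PosDef) : IsUnit (sqrtM X).det := by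
  rw [sqrtM_eq_cfc hX.posSemidef]
  refine (isUnit_iff_isUnit_det _).mp ((isUnit_cfc_iff Real.sqrt X (ha := hX.1)).mpr ?_)
  rw [hX.1.spectrum_real_eq_range_eigenvalues]
  rintro _ ⟨i, rfl⟩
  exact (Real.sqrt_pos.mpr (hX.eigenvalues_pos i)).ne'

theorem invSqrt_smul {c : ℝ} (hc : 0 < c) {X : Mat n} (hX : X.PosDef) :
    invSqrt (c • X) = (√c)⁻¹ • invSqrt X := by
  rw [invSqrt, invSqrt, sqrtM_smul hc.le hX.posSemidef]
  refine inv_eq_left_inv ?_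
  rw [smul_mul_smul_comm, inv_mul_cancel₀ (Real.sqrt_pos.mpr hc).ne', one_smul,
    nonsing_inv_mul _ (isUnit_det_sqrtM hX)]

theorem conjTranspose_invSqrt {X : Mat n} (hX : X.PosSemidef) : (invSqrt X)ᴴ = invSqrt X := by
  have h : (cfc Real.sqrt X)ᴴ = cfc Real.sqrt X := cfc_predicate (R := ℝ) Real.sqrt X
  rw [invSqrt, sqrtM_eq_cfc hX, conjTranspose_nonsing_inv, h]

theorem Matrix.PosDef.invSqrt_mul_mul_invSqrt {X Y : Mat n} (hY : Y.PosDef) (hX : X.PosDef) :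
    (invSqrt X * Y * invSqrt X).PosDef := by
  have hinj : Function.Injective (invSqrt X).mulVec := mulVec_injective_iff_isUnit.mpr <|
    (isUnit_iff_isUnit_det _).mpr (isUnit_nonsing_inv_det _ (isUnit_det_sqrtM hX))
  have h := hY.conjTranspose_mul_mul_same hinj
  rwa [conjTranspose_invSqrt hX.posSemidef] at h

open Pointwise in
theorem spectrum_smul_of_pos {r : ℝ} (hr : 0 < r) (A : Mat n) :
    spectrum ℝ (r • A) = r • spectrum ℝ A := by
  simpa only [Units.smul_def, Units.val_mk0] using
    spectrum.unit_smul_eq_smul A (Units.mk0 r hr.ne')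

theorem lamMax_smul {r : ℝ} (hr : 0 < r) (A : Mat n) : lamMax (r • A) = r * lamMax A := by
  rw [lamMax, lamMax, spectrum_smul_of_pos hr, Real.sSup_smul_of_nonneg hr.le, smul_eq_mul]

theorem lamMin_smul {r : ℝ} (hr : 0 < r) (A : Mat n) : lamMin (r • A) = r * lamMin A := by
  rw [lamMin, lamMin, spectrum_smul_of_pos hr, Real.sInf_smul_of_nonneg hr.le, smul_eq_mul]

theorem Matrix.PosDef.lamMin_pos [NeZero n] {A : Mat n} (hA : A.PosDef) : 0 < lamMin A := by
  rw [lamMin, hA.1.spectrum_real_eq_range_eigenvalues]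
  obtain ⟨i, hi⟩ := (Set.range_nonempty hA.1.eigenvalues).csInf_mem (Set.finite_range _)
  exact hi ▸ hA.eigenvalues_pos i

theorem Matrix.PosDef.lamMax_pos [NeZero n] {A : Mat n} (hA : A.PosDef) : 0 < lamMax A := by
  rw [lamMax, hA.1.spectrum_real_eq_range_eigenvalues]
  obtain ⟨i, hi⟩ := (Set.range_nonempty hA.1.eigenvalues).csSup_mem (Set.finite_range _)
  exact hi ▸ hA.eigenvalues_pos i

theorem invSqrt_smul_mul_smul_mul {c d : ℝ} (hc : 0 < c) {X : Mat n} (hX : X.PosDef)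
    (Y : Mat n) : invSqrt (c • X) * (d • Y) * invSqrt (c • X) =
      (d / c) • (invSqrt X * Y * invSqrt X) := by
  rw [invSqrt_smul hc hX]
  simp only [Matrix.smul_mul, Matrix.mul_smul, smul_smul]
  congr 1
  have hsq : (√c)⁻¹ * (√c)⁻¹ = c⁻¹ := by rw [← mul_inv, Real.mul_self_sqrt hc.le]
  rw [div_eq_mul_inv, ← hsq]
  ring

theorem gmin_pos [NeZero n] {X Y : Mat n} (hX : X.PosDef) (hY : Y.PosDef) : 0 < gmin X Y :=
  (hY.invSqrt_mul_mul_invSqrt hX).lamMin_pos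

theorem gmax_pos [NeZero n] {X Y : Mat n} (hX : X.PosDef) (hY : Y.PosDef) : 0 < gmax X Y :=
  (hY.invSqrt_mul_mul_invSqrt hX).lamMax_pos

theorem gmax_smul_smul {c d : ℝ} (hc : 0 < c) (hd : 0 < d) {X : Mat n} (hX : X.PosDef)
    (Y : Mat n) : gmax (c • X) (d • Y) = d / c * gmax X Y := by
  rw [gmax, gmax, invSqrt_smul_mul_smul_mul hc hX, lamMax_smul (div_pos hd hc)]

theorem gmin_smul_smul {c d : ℝ} (hc : 0 < c) (hd : 0 < d) {X : Mat n} (hX : X.PosDef)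
    (Y : Mat n) : gmin (c • X) (d • Y) = d / c * gmin X Y := by
  rw [gmin, gmin, invSqrt_smul_mul_smul_mul hc hX, lamMin_smul (div_pos hd hc)]

end Matrix

section MeanEquation

variable {n : ℕ}

theorem mCoef_eq_invLogMean (X Y : Mat n) : mCoef X Y = invLogMean (gmin X Y) (gmax X Y) := rfl

theorem oCoef_eq_thompsonOffset (X Y : Mat n) :
    oCoef X Y = thompsonOffset (gmin X Y) (gmax X Y) := rfl

variable [NeZero n] {c d : ℝ} {X Y : Mat n}

theorem mCoef_smul_smul (hc : 0 < c) (hd : 0 < d) (hX : X.PosDef) (hY : Y.PosDef) :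
    mCoef (c • X) (d • Y) = mCoef X Y / (d / c) := by
  rw [mCoef_eq_invLogMean, mCoef_eq_invLogMean, gmin_smul_smul hc hd hX, gmax_smul_smul hc hd hX,
    invLogMean_mul_mul (gmin_pos hX hY).ne' (gmax_pos hX hY).ne' (div_pos hd hc).ne']

theorem oCoef_smul_smul (hc : 0 < c) (hd : 0 < d) (hX : X.PosDef) (hY : Y.PosDef) :
    oCoef (c • X) (d • Y) = oCoef X Y + log (d / c) := by
  rw [oCoef_eq_thompsonOffset, oCoef_eq_thompsonOffset, gmin_smul_smul hc hd hX,
    gmax_smul_smul hc hd hX,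
    thompsonOffset_mul_mul (gmin_pos hX hY).ne' (gmax_pos hX hY).ne' (div_pos hd hc).ne']

end MeanEquation

theorem sum_log_div_prod_rpow_one_div_card {ι : Type*} [Fintype ι] {c : ι → ℝ}
    (hc : ∀ i, 0 < c i) : ∑ i, log (c i / (∏ j, c j) ^ (1 / (Fintype.card ι : ℝ))) = 0 := by
  rcases isEmpty_or_nonempty ι with _ | _
  · simp
  have hprod : 0 < ∏ j, c j := Finset.prod_pos fun j _ => hc j
  simp only [log_div (hc _).ne' (rpow_pos_of_pos hprod _).ne', Finset.sum_sub_distrib,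
    Finset.sum_const, Finset.card_univ, nsmul_eq_mul, log_rpow hprod,
    ← log_prod fun j _ => (hc j).ne']
  field_simp
  ring

theorem MeanEq.smul {n k : ℕ} [NeZero n] {Y : Fin k → Mat n} {X : Mat n}
    (hY : ∀ j, (Y j).PosDef) (hX : X.PosDef) (hmean : MeanEq Y X) {c : Fin k → ℝ}
    (hc : ∀ j, 0 < c j) {γ : ℝ} (hγ : 0 < γ) (hlog : ∑ j, log (c j / γ) = 0) :
    MeanEq (fun j => c j • Y j) (γ • X) := by
  have hm : ∀ j, mCoef (γ • X) (c j • Y j) • (c j • Y j) = γ • (mCoef X (Y j) • Y j) := by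
    intro j
    rw [mCoef_smul_smul hγ (hc j) hX (hY j), smul_smul, smul_smul]
    congr 1
    field_simp [(hc j).ne']
  have ho : ∑ j, oCoef (γ • X) (c j • Y j) = ∑ j, oCoef X (Y j) := by
    simp only [oCoef_smul_smul hγ (hc _) hX (hY _), Finset.sum_add_distrib, hlog, add_zero]
  calc ∑ j, mCoef (γ • X) (c j • Y j) • (c j • Y j) + (∑ j, oCoef (γ • X) (c j • Y j)) • (γ • X)
      = γ • (∑ j, mCoef X (Y j) • Y j + (∑ j, oCoef X (Y j)) • X) := by
        rw [Finset.sum_congr rfl fun j _ => hm j, ho, smul_add, Finset.smul_sum, smul_comm γ]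
    _ = 0 := by rw [hmean, smul_zero]

theorem inductive_mean_joint_homogeneous_general {n k : ℕ} (Y : Fin k → Mat n)
    (hY : ∀ j, (Y j).PosDef) (Xs : Mat n) (hXs : Xs.PosDef) (hmean : MeanEq Y Xs)
    (c : Fin k → ℝ) (hc : ∀ j, 0 < c j) :
    MeanEq (fun j => c j • Y j) (((∏ j, c j) ^ ((1 : ℝ) / (k : ℝ))) • Xs) := by
  rcases Nat.eq_zero_or_pos n with rfl | hn
  · exact Subsingleton.elim _ _
  have : NeZero n := ⟨hn.ne'⟩
  refine hmean.smul hY hXs hc (rpow_pos_of_pos (Finset.prod_pos fun j _ => hc j) _) ?_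
  simpa using sum_log_div_prod_rpow_one_div_card hc

/-- joint homogeneity of the inductive Thompson mean: if `X*` solves the
mean equation for `(Y₁,…,Y_k)` and `c₁,…,c_k > 0`, then `(c₁⋯c_k)^{1/k}·X*` solves the
mean equation for `(c₁Y₁,…,c_kY_k)`. -/
theorem inductive_mean_joint_homogeneous {n k : ℕ} (hk : 0 < k) (Y : Fin k → Mat n)
    (hY : ∀ j, (Y j).PosDef) (Xs : Mat n) (hXs : Xs.PosDef) (hmean : MeanEq Y Xs)
    (c : Fin k → ℝ) (hc : ∀ j, 0 < c j) :
    MeanEq (fun j => c j • Y j) (((∏ j, c j) ^ ((1 : ℝ) / (k : ℝ))) • Xs) :=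
  inductive_mean_joint_homogeneous_general Y hY Xs hXs hmean c hc
end
end
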